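/- The R-semantics of S-CORE is total: for every S-CORE term P and state σ there exists a state τ such that ⟨P, σ⟩ ⇓ τ. -/

import Mathlib

def push : ℤ × List ℤ × ℕ → ℤ × List ℤ × ℕ
  | (v, t, 0) => (0, v::t, 0)
  | (0, v::t, c+1) => (0, v::t, c+1)
  | (u, s, c+1) => (u, s, c)

def pop : ℤ × List ℤ × ℕ → ℤ × List ℤ × ℕ
  | (0, v::t, 0) => (v, t, 0)
  | (0, v::t, c+1) => (0, v::t, c+1)
  | (u, s, c) => (u, s, c+1)

inductive Term where
  | skip : Term
  | inc : String → Term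
  | dec : String → Term
  | push : String → Term
  | pop : String → Term
  | seq : Term → Term → Term
  | forLoop : String → Term → Term

def inv : Term → Term
  | .skip => .skip
  | .inc x => .dec x
  | .dec x => .inc x
  | .push x => .pop x
  | .pop x => .push x
  | .seq p q => .seq (inv q) (inv p)
  | .forLoop x p => .forLoop x (inv p)

def occurs (x : String) : Term → Prop
  | .skip => False
  | .inc y => x = y
  | .dec y => x = y
  | .push y => x = y
  | .pop y => x = y
  | .seq p q => occurs x p ∨ occurs x q
  | .forLoop y p => x = y ∨ occurs x p

/-- Well-formed terms: the leading variable of a `FOR` never occurs in its body. -/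
def WF : Term → Prop
  | .seq p q => WF p ∧ WF q
  | .forLoop x p => ¬ occurs x p ∧ WF p
  | _ => True

abbrev State := String → ℤ × List ℤ × ℕ

def upd (σ : State) (x : String) (p : ℤ × List ℤ × ℕ) : State :=
  fun y => if y = x then p else σ y

mutual
/-- The big-step R-semantics of S-CORE. -/
inductive Bigstep : Term → State → State → Prop where
  | skip (σ) : Bigstep .skip σ σ
  | inc (x σ) : Bigstep (.inc x) σ (upd σ x ((σ x).1 + 1, (σ x).2.1, (σ x).2.2))
  | dec (x σ) : Bigstep (.dec x) σ (upd σ x ((σ x).1 - 1, (σ x).2.1, (σ x).2.2))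
  | push (x σ) : Bigstep (.push x) σ (upd σ x (_root_.push (σ x)))
  | pop (x σ) : Bigstep (.pop x) σ (upd σ x (_root_.pop (σ x)))
  | seq {p q σ ν τ} : Bigstep p σ ν → Bigstep q ν τ → Bigstep (.seq p q) σ τ
  | forFwd {x p σ τ} : (σ x).1 ≥ 0 → Iter p (σ x).1.toNat σ τ →
      Bigstep (.forLoop x p) σ τ
  | forBwd {x p σ τ} : (σ x).1 < 0 → Iter (inv p) (-(σ x).1).toNat σ τ →
      Bigstep (.forLoop x p) σ τ

/-- `Iter p n σ τ`: `n`-fold iteration of `p` takes `σ` to `τ`. -/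
inductive Iter : Term → ℕ → State → State → Prop where
  | base (p σ) : Iter p 0 σ σ
  | step {p n σ ν τ} : Bigstep p σ ν → Iter p n ν τ → Iter p (n+1) σ τ
end

/-
A FOR loop runs either its body or the body's inverse, so totality is proved for a term and its
inverse simultaneously, by structural induction; the FOR case of the inverse closes because `inv`
is an involution.
-/

namespace Term

def Total (p : Term) : Prop := ∀ σ, ∃ τ, Bigstep p σ τ

@[simp]
theorem inv_inv (p : Term) : inv (inv p) = p := by
  induction p <;> simp_all [inv]

theorem Total.iter {p : Term} (hp : Total p) (n : ℕ) (σ : State) : ∃ τ, Iter p n σ τ := by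
  induction n generalizing σ with
  | zero => exact ⟨σ, .base p σ⟩
  | succ n ih =>
    obtain ⟨ν, hν⟩ := hp σ
    obtain ⟨τ, hτ⟩ := ih ν
    exact ⟨τ, .step hν hτ⟩

theorem Total.seq {p q : Term} (hp : Total p) (hq : Total q) : Total (.seq p q) := fun σ => by
  obtain ⟨ν, hν⟩ := hp σ
  obtain ⟨τ, hτ⟩ := hq ν
  exact ⟨τ, .seq hν hτ⟩

theorem Total.forLoop (x : String) {p : Term} (hp : Total p) (hinv : Total (inv p)) :
    Total (.forLoop x p) := fun σ => by
  rcases le_or_gt 0 (σ x).1 with hs | hs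
  · obtain ⟨τ, hτ⟩ := hp.iter (σ x).1.toNat σ
    exact ⟨τ, .forFwd hs hτ⟩
  · obtain ⟨τ, hτ⟩ := hinv.iter (-(σ x).1).toNat σ
    exact ⟨τ, .forBwd hs hτ⟩

theorem total_and_total_inv (p : Term) : Total p ∧ Total (inv p) := by
  induction p with
  | skip => exact ⟨fun σ => ⟨σ, .skip σ⟩, fun σ => ⟨σ, .skip σ⟩⟩
  | inc x => exact ⟨fun σ => ⟨_, .inc x σ⟩, fun σ => ⟨_, .dec x σ⟩⟩
  | dec x => exact ⟨fun σ => ⟨_, .dec x σ⟩, fun σ => ⟨_, .inc x σ⟩⟩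
  | push x => exact ⟨fun σ => ⟨_, .push x σ⟩, fun σ => ⟨_, .pop x σ⟩⟩
  | pop x => exact ⟨fun σ => ⟨_, .pop x σ⟩, fun σ => ⟨_, .push x σ⟩⟩
  | seq p q ihp ihq => exact ⟨ihp.1.seq ihq.1, ihq.2.seq ihp.2⟩
  | forLoop x p ih =>
    refine ⟨.forLoop x ih.1 ih.2, .forLoop x ih.2 ?_⟩
    simpa only [inv_inv] using ih.1

end Term

theorem rsem_total (P : Term) (σ : State) : ∃ τ : State, Bigstep P σ τ :=
  (Term.total_and_total_inv P).1 σ
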